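/- arXiv:1907.07796 — 4 statements merged into one kernel-verified Lean document; each statement's English description precedes it below -/
import Mathlib

section
/- If S is a set of n points in general position in the plane with n odd, then S admits a halving matching: every point of S can be matched to a halving line through it. -/
open Filter Set

noncomputable section

abbrev Pt : Type := ℝ × ℝ

/-- Signed area determinant of two vectors in the plane. -/
def det2 (u v : Pt) : ℝ := u.1 * v.2 - u.2 * v.1

/-- A finite point set is in general position if no three of its points are collinear. -/
def GenPos (S : Finset Pt) : Prop :=
  ∀ a ∈ S, ∀ b ∈ S, ∀ c ∈ S, a ≠ b → a ≠ c → b ≠ c →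
    ¬ Collinear ℝ ({a, b, c} : Set Pt)

/-- The line through `a` with direction `v`. -/
def lineThrough (a v : Pt) : Set Pt := {x | det2 v (x - a) = 0}

/-- `L` is a halving line of `S`: a line through at least one point of `S`
with equally many points of `S` in each open half-plane. -/
def IsHalvingLine (S : Finset Pt) (L : Set Pt) : Prop :=
  ∃ a v : Pt, v ≠ 0 ∧ L = lineThrough a v ∧ (∃ p ∈ S, p ∈ L) ∧
    Set.ncard {x ∈ (S : Set Pt) | 0 < det2 v (x - a)} =
      Set.ncard {x ∈ (S : Set Pt) | det2 v (x - a) < 0}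

/-- `S` has a halving matching: an injective assignment to each point of `S` of
a halving line through it. -/
def HasHalvingMatching (S : Finset Pt) : Prop :=
  ∃ ℓ : Pt → Set Pt,
    (∀ p ∈ S, IsHalvingLine S (ℓ p) ∧ p ∈ ℓ p) ∧
    ∀ p ∈ S, ∀ q ∈ S, p ≠ q → ℓ p ≠ ℓ q

/-!
By general position, the other points of `S` lie in pairwise distinct directions from `p ∈ S`.
Leaving out one direction parallel to none of them, rotate a line about `p`
through the remaining half-turn of directions: the number of points strictly on its positive side
changes by exactly one whenever the line passes a point, and moves from the number of points on one
side of the omitted line to the number on the other side. These two numbers add up to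
`#S - 1 = 2k`, so some line through `p` containing no other point of `S` has `k` points on each
side. Lines through different points that contain no other point of `S` are distinct.
-/

open Finset

section Sweep

variable {α : Type*} (r : α → ℝ) (P : α → Prop) [DecidablePred P]

-- `r x` is the parameter at which a sweeping line passes `x`, and `P x` says whether `x` is on
-- its positive side afterwards.
def sweepCount (U : Finset α) (t : ℝ) : ℕ := #{x ∈ U | if P x then r x < t else t < r x}

variable {r P}

lemma sweepCount_of_forall_lt {U : Finset α} {t : ℝ} (h : ∀ x ∈ U, r x < t) :
    sweepCount r P U t = #{x ∈ U | P x} := by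
  unfold sweepCount
  congr 1
  refine filter_congr fun x hx => ?_
  split_ifs with hP <;> simp [hP, h x hx, (h x hx).asymm]

lemma sweepCount_insert_of_lt [DecidableEq α] {a : α} {U : Finset α} {t : ℝ} (ha : a ∉ U)
    (ht : t < r a) : sweepCount r P (insert a U) t = sweepCount r P U t + if P a then 0 else 1 := by
  unfold sweepCount
  rw [filter_insert]
  split_ifs <;> simp_all [ht.asymm]

lemma exists_lt_sweepCount_eq (U : Finset α) (hr : Set.InjOn r U) {M : ℝ}
    (hM : ∀ x ∈ U, r x < M) {c : ℕ} (hc₁ : min #{x ∈ U | P x} #{x ∈ U | ¬P x} ≤ c)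
    (hc₂ : c ≤ max #{x ∈ U | P x} #{x ∈ U | ¬P x}) :
    ∃ t < M, (∀ x ∈ U, r x ≠ t) ∧ sweepCount r P U t = c := by
  classical
  induction U using Finset.induction_on_max_value r generalizing M c with
  | empty => exact ⟨M - 1, by linarith, by simp, by simp_all [sweepCount]⟩
  | insert a U ha hmax ih =>
    have hlt : ∀ x ∈ U, r x < r a := fun x hx => (hmax x hx).lt_of_ne fun h =>
      ne_of_mem_of_not_mem hx ha (hr (mem_insert_of_mem hx) (mem_insert_self a U) h)
    have hcard : #{x ∈ insert a U | P x} = #{x ∈ U | P x} + (if P a then 1 else 0) ∧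
        #{x ∈ insert a U | ¬P x} = #{x ∈ U | ¬P x} + (if P a then 0 else 1) := by
      simp only [filter_insert]
      split_ifs <;> simp [ha]
    by_cases hcP : c = #{x ∈ insert a U | P x}
    · have hM' : r a < M := hM a (mem_insert_self a U)
      have habove : ∀ x ∈ insert a U, r x < (r a + M) / 2 := by
        simp only [Finset.mem_insert, forall_eq_or_imp]
        exact ⟨by linarith, fun x hx => by linarith [hlt x hx]⟩
      exact ⟨(r a + M) / 2, by linarith, fun x hx => (habove x hx).ne,
        by rw [sweepCount_of_forall_lt habove, hcP]⟩
    · obtain ⟨t, htM, hzero, hcount⟩ := ih (hr.mono (by simp)) hlt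
        (c := c - if P a then 0 else 1) (by split_ifs at hcard ⊢ <;> omega)
        (by split_ifs at hcard ⊢ <;> omega)
      have hM' : r a < M := hM a (mem_insert_self a U)
      refine ⟨t, by linarith, ?_, ?_⟩
      · simp only [Finset.mem_insert, forall_eq_or_imp]
        exact ⟨htM.ne', hzero⟩
      · rw [sweepCount_insert_of_lt ha htM, hcount]
        split_ifs at hcard ⊢ <;> omega

lemma filter_lt_zero_eq_filter_not_pos {U : Finset α} {f : α → ℝ}
    (hf : ∀ x ∈ U, f x ≠ 0) :
    {x ∈ U | f x < 0} = {x ∈ U | ¬0 < f x} :=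
  filter_congr fun x hx => ⟨fun h => h.asymm, fun h => (not_lt.1 h).lt_of_ne (hf x hx)⟩

lemma pos_add_mul_iff {a b t : ℝ} (hb : b ≠ 0) :
    0 < a + t * b ↔ if 0 < b then -a / b < t else t < -a / b := by
  have h : a + t * b = b * (t - -a / b) := by field_simp; ring
  rw [h]
  split_ifs with hb'
  · rw [mul_pos_iff_of_pos_left hb', sub_pos]
  · have hb'' : b < 0 := lt_of_le_of_ne (not_lt.1 hb') hb
    rw [mul_pos_iff, sub_pos, sub_neg]
    constructor
    · rintro (⟨h1, -⟩ | ⟨-, h2⟩)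
      · exact absurd h1 hb'
      · exact h2
    · exact fun h2 => Or.inr ⟨hb'', h2⟩

theorem exists_card_filter_pos_add_mul_eq (a b : α → ℝ) (U : Finset α)
    (hb : ∀ x ∈ U, b x ≠ 0)
    (hroot : ∀ x ∈ U, ∀ y ∈ U, ∀ t : ℝ,
      a x + t * b x = 0 → a y + t * b y = 0 → x = y)
    {c : ℕ} (hc₁ : min #{x ∈ U | 0 < b x} #{x ∈ U | b x < 0} ≤ c)
    (hc₂ : c ≤ max #{x ∈ U | 0 < b x} #{x ∈ U | b x < 0}) :
    ∃ t : ℝ, (∀ x ∈ U, a x + t * b x ≠ 0) ∧ #{x ∈ U | 0 < a x + t * b x} = c := by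
  have hroot_iff : ∀ x ∈ U, ∀ t : ℝ, a x + t * b x = 0 ↔ t = -a x / b x := by
    intro x hx t
    rw [eq_div_iff (hb x hx)]
    constructor <;> intro h <;> linarith
  have hneg := filter_lt_zero_eq_filter_not_pos hb
  obtain ⟨M, hM⟩ := (U.image fun x => -a x / b x).bddAbove
  obtain ⟨t, -, hne, hcount⟩ := exists_lt_sweepCount_eq (r := fun x => -a x / b x)
    (P := fun x => 0 < b x) U
    (fun x hx y hy hxy => hroot x hx y hy _ ((hroot_iff x hx _).2 rfl) ((hroot_iff y hy _).2 hxy))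
    (M := M + 1) (c := c) (fun x hx => by linarith [hM (mem_image_of_mem _ hx)])
    (by rwa [← hneg]) (by rwa [← hneg])
  refine ⟨t, fun x hx h => hne x hx ((hroot_iff x hx t).1 h).symm, ?_⟩
  rw [← hcount, sweepCount]
  exact congrArg card (filter_congr fun x hx => pos_add_mul_iff (hb x hx))

end Sweep

lemma exists_smul_eq_of_det2_eq_zero {v z : Pt} (hv : v ≠ 0) (h : det2 v z = 0) :
    ∃ s : ℝ, s • v = z := by
  simp only [det2] at h
  by_cases hv₁ : v.1 = 0
  · have hv₂ : v.2 ≠ 0 := fun hv₂ => hv (Prod.ext hv₁ hv₂)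
    refine ⟨z.2 / v.2, Prod.ext ?_ ?_⟩
    · simp only [Prod.smul_fst, smul_eq_mul, hv₁, mul_zero]
      rw [hv₁, zero_mul, zero_sub, neg_eq_zero] at h
      exact ((mul_eq_zero.1 h).resolve_left hv₂).symm
    · simp [hv₂]
  · refine ⟨z.1 / v.1, Prod.ext (by simp [hv₁]) ?_⟩
    simp only [Prod.smul_snd, smul_eq_mul]
    field_simp
    linarith

lemma collinear_of_mem_lineThrough {p v x y : Pt} (hv : v ≠ 0) (hx : x ∈ lineThrough p v)
    (hy : y ∈ lineThrough p v) : Collinear ℝ ({p, x, y} : Set Pt) := by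
  rw [collinear_iff_of_mem (Set.mem_insert p _)]
  refine ⟨v, fun q hq => ?_⟩
  have hq' : det2 v (q - p) = 0 := by
    rcases hq with rfl | rfl | rfl
    · simp [det2]
    · exact hx
    · exact hy
  obtain ⟨s, hs⟩ := exists_smul_eq_of_det2_eq_zero hv hq'
  exact ⟨s, by rw [hs, vadd_eq_add, sub_add_cancel]⟩

lemma exists_det2_ne_zero (V : Finset Pt) (hV : (0 : Pt) ∉ V) :
    ∃ s : ℝ, ∀ z ∈ V, det2 (1, s) z ≠ 0 := by
  obtain ⟨s, hs⟩ := Infinite.exists_notMem_finset (V.image fun z => z.2 / z.1)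
  refine ⟨s, fun z hz h => ?_⟩
  simp only [det2, one_mul] at h
  by_cases hz₁ : z.1 = 0
  · exact hV (by rwa [show z = 0 from Prod.ext hz₁ (by simpa [hz₁] using h)] at hz)
  · exact hs (mem_image.2 ⟨z, hz, by field_simp; linarith⟩)

lemma card_filter_erase_of_not {S : Finset Pt} {p : Pt} {Q : Pt → Prop} [DecidablePred Q]
    (hQ : ¬Q p) : #{x ∈ S.erase p | Q x} = #{x ∈ S | Q x} := by
  rw [filter_erase, erase_eq_of_notMem (by simp [hQ])]

lemma exists_card_filter_det2_pos_eq {S : Finset Pt} (hgp : GenPos S) {p : Pt} (hp : p ∈ S)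
    {k : ℕ} (hk : #(S.erase p) = 2 * k) :
    ∃ v : Pt, v ≠ 0 ∧ (∀ x ∈ S.erase p, det2 v (x - p) ≠ 0) ∧
      #{x ∈ S.erase p | 0 < det2 v (x - p)} = k := by
  obtain ⟨s, hs⟩ := exists_det2_ne_zero ((S.erase p).image (· - p)) (by simp [sub_eq_zero])
  have hb : ∀ x ∈ S.erase p, det2 (1, s) (x - p) ≠ 0 :=
    fun x hx => hs _ (mem_image_of_mem _ hx)
  -- `v t` runs over all directions but that of `(1, s)`, which no `x - p` has: as `t` increases,
  -- the line through `p` with direction `v t` passes every other point of `S` exactly once.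
  let v : ℝ → Pt := fun t => (0, 1) + t • (1, s)
  have hdet : ∀ t z, det2 (v t) z = det2 (0, 1) z + t * det2 (1, s) z := by
    intro t z
    simp only [v, det2, Prod.fst_add, Prod.snd_add, Prod.smul_fst, Prod.smul_snd, smul_eq_mul]
    ring
  have hv : ∀ t, v t ≠ 0 := by
    intro t h
    have := hdet t (1, s)
    simp [h, det2] at this
  have hline : ∀ t x,
      x ∈ lineThrough p (v t) ↔ det2 (0, 1) (x - p) + t * det2 (1, s) (x - p) = 0 :=
    fun t x => by rw [lineThrough, Set.mem_ofPred_eq, hdet]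
  have hsplit : #{x ∈ S.erase p | 0 < det2 (1, s) (x - p)} +
      #{x ∈ S.erase p | det2 (1, s) (x - p) < 0} = 2 * k := by
    rw [filter_lt_zero_eq_filter_not_pos hb, card_filter_add_card_filter_not, hk]
  obtain ⟨t, hzero, hpos⟩ := exists_card_filter_pos_add_mul_eq (fun x => det2 (0, 1) (x - p))
    (fun x => det2 (1, s) (x - p)) (S.erase p) hb
    (fun x hx y hy t hxt hyt => by
      by_contra hxy
      exact hgp p hp x (mem_of_mem_erase hx) y (mem_of_mem_erase hy) (ne_of_mem_erase hx).symm
        (ne_of_mem_erase hy).symm hxy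
        (collinear_of_mem_lineThrough (hv t) ((hline t x).2 hxt) ((hline t y).2 hyt)))
    (c := k) (by omega) (by omega)
  refine ⟨v t, hv t, fun x hx => ?_, ?_⟩
  · rw [hdet]
    exact hzero x hx
  · simp only [hdet]
    exact hpos

lemma exists_halving_lineThrough {S : Finset Pt} (hgp : GenPos S) (hodd : Odd #S) {p : Pt}
    (hp : p ∈ S) :
    ∃ v : Pt, v ≠ 0 ∧ (∀ q ∈ S, q ∈ lineThrough p v → q = p) ∧
      #{x ∈ S | 0 < det2 v (x - p)} = #{x ∈ S | det2 v (x - p) < 0} := by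
  obtain ⟨k, hk⟩ := hodd
  obtain ⟨v, hv, hzero, hpos⟩ :=
    exists_card_filter_det2_pos_eq hgp hp (k := k) (by rw [card_erase_of_mem hp]; omega)
  refine ⟨v, hv, fun q hq hql => ?_, ?_⟩
  · by_contra hqp
    exact hzero q (mem_erase.2 ⟨hqp, hq⟩) hql
  · have hp0 : det2 v (p - p) = 0 := by simp [det2]
    rw [← card_filter_erase_of_not (Q := fun x => 0 < det2 v (x - p)) hp0.not_gt,
      ← card_filter_erase_of_not (Q := fun x => det2 v (x - p) < 0) hp0.not_lt,
      filter_lt_zero_eq_filter_not_pos hzero]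
    have := card_filter_add_card_filter_not (s := S.erase p) (fun x => 0 < det2 v (x - p))
    rw [card_erase_of_mem hp] at this
    omega

lemma mem_lineThrough_self (p v : Pt) : p ∈ lineThrough p v := by
  simp [lineThrough, det2]

lemma isHalvingLine_lineThrough {S : Finset Pt} {p v : Pt} (hv : v ≠ 0) (hp : p ∈ S)
    (h : #{x ∈ S | 0 < det2 v (x - p)} = #{x ∈ S | det2 v (x - p) < 0}) :
    IsHalvingLine S (lineThrough p v) := by
  refine ⟨p, v, hv, rfl, ⟨p, hp, mem_lineThrough_self p v⟩, ?_⟩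
  have hcoe : ∀ (Q : Pt → Prop) [DecidablePred Q],
      {x ∈ (S : Set Pt) | Q x} = ↑{x ∈ S | Q x} :=
    fun Q _ => (coe_filter Q S).symm
  rw [hcoe, hcoe, Set.ncard_coe_finset, Set.ncard_coe_finset, h]

/-- Every set of an odd number of points in general position admits a halving
matching. -/
theorem odd_card_hasHalvingMatching (S : Finset Pt)
    (hgp : GenPos S) (hodd : Odd S.card) :
    HasHalvingMatching S := by
  choose! v hv hunique hcount using fun p (hp : p ∈ S) => exists_halving_lineThrough hgp hodd hp
  refine ⟨fun p => lineThrough p (v p), fun p hp => ⟨isHalvingLine_lineThrough (hv p hp) hp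
    (hcount p hp), mem_lineThrough_self p (v p)⟩, fun p hp q hq hpq hl => hpq ?_⟩
  have hq_mem : q ∈ lineThrough p (v p) := (congrFun hl q).mpr (mem_lineThrough_self q (v q))
  exact (hunique p hp q hq hq_mem).symm
end
end

section
/- There exists a set S of 4 points in general position in the plane that admits no halving matching. -/
/-! Take a triangle `pA pB pC` with an interior point `pD`. A halving line of four points contains
an even number of them, hence two; a line through two vertices of the triangle has the other two
points weakly on one side, so it is halving only if it contains all four. Hence every halving line
passes through `pD`. If `ℓ pD` is the line through `pD` and a vertex `X`, then `ℓ X`, a halving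
line through `X` and hence through `pD`, is the same line. -/

open Filter Set

noncomputable section

open Finset

lemma exists_eq_smul_of_det2_eq_zero {v w : Pt} (hv : v ≠ 0) (h : det2 v w = 0) :
    ∃ t : ℝ, w = t • v := by
  have h' : v.1 * w.2 = v.2 * w.1 := by rw [det2, sub_eq_zero] at h; exact h
  rcases eq_or_ne v.1 0 with h1 | h1
  · have h2 : v.2 ≠ 0 := fun h2 => hv (Prod.ext h1 h2)
    refine ⟨w.2 / v.2, Prod.ext ?_ ?_⟩ <;> simp only [Prod.smul_fst, Prod.smul_snd, smul_eq_mul]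
    · rw [h1, zero_mul, eq_comm, mul_eq_zero] at h'
      rw [h1, mul_zero]; exact h'.resolve_left h2
    · field_simp
  · refine ⟨w.1 / v.1, Prod.ext ?_ ?_⟩ <;> simp only [Prod.smul_fst, Prod.smul_snd, smul_eq_mul]
    · field_simp
    · field_simp; linarith

lemma mem_lineThrough_iff {a v x : Pt} (hv : v ≠ 0) :
    x ∈ lineThrough a v ↔ ∃ t : ℝ, x = a + t • v := by
  refine ⟨fun hx => ?_, ?_⟩
  · obtain ⟨t, ht⟩ := exists_eq_smul_of_det2_eq_zero hv hx
    exact ⟨t, by rw [← ht, add_sub_cancel]⟩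
  · rintro ⟨t, rfl⟩
    simp only [lineThrough, Set.mem_ofPred_eq, add_sub_cancel_left, det2, Prod.smul_fst,
      Prod.smul_snd, smul_eq_mul]
    ring

lemma exists_det2_eq_mul_of_mem_lineThrough {a v p q : Pt} (hv : v ≠ 0)
    (hp : p ∈ lineThrough a v) (hq : q ∈ lineThrough a v) (hpq : p ≠ q) :
    ∃ c : ℝ, c ≠ 0 ∧ ∀ x, det2 v (x - a) = c * det2 (q - p) (x - p) := by
  obtain ⟨s, rfl⟩ := (mem_lineThrough_iff hv).1 hp
  obtain ⟨t, rfl⟩ := (mem_lineThrough_iff hv).1 hq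
  have hts : t - s ≠ 0 := fun h => hpq (by rw [sub_eq_zero.1 h])
  refine ⟨(t - s)⁻¹, inv_ne_zero hts, fun x => ?_⟩
  have : det2 (a + t • v - (a + s • v)) (x - (a + s • v)) = (t - s) * det2 v (x - a) := by
    simp only [det2, Prod.fst_add, Prod.snd_add, Prod.fst_sub, Prod.snd_sub, Prod.smul_fst,
      Prod.smul_snd, smul_eq_mul]
    ring
  rw [this, inv_mul_cancel_left₀ hts]

lemma lineThrough_eq_of_mem {a v p q : Pt} (hv : v ≠ 0)
    (hp : p ∈ lineThrough a v) (hq : q ∈ lineThrough a v) (hpq : p ≠ q) :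
    lineThrough a v = lineThrough p (q - p) := by
  obtain ⟨c, hc, hdet⟩ := exists_det2_eq_mul_of_mem_lineThrough hv hp hq hpq
  ext x
  simp only [lineThrough, Set.mem_ofPred_eq, hdet, mul_eq_zero, hc, false_or]

lemma IsHalvingLine.eq_lineThrough_of_mem {S : Finset Pt} {L : Set Pt} {p q : Pt}
    (hL : IsHalvingLine S L) (hp : p ∈ L) (hq : q ∈ L) (hpq : p ≠ q) :
    L = lineThrough p (q - p) := by
  obtain ⟨a, v, hv, rfl, -⟩ := hL
  exact lineThrough_eq_of_mem hv hp hq hpq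

lemma Finset.ncard_sep_coe {α : Type*} (S : Finset α) (P : α → Prop) [DecidablePred P] :
    {x ∈ (S : Set α) | P x}.ncard = #(S.filter P) := by
  rw [← Set.ncard_coe_finset, coe_filter]; rfl

lemma card_filter_pos_add_card_filter_neg_add_card_filter_eq_zero {α : Type*} (S : Finset α)
    (f : α → ℝ) :
    #(S.filter (0 < f ·)) + #(S.filter (f · < 0)) + #(S.filter (f · = 0)) = #S := by
  rw [card_filter, card_filter, card_filter, ← sum_add_distrib, ← sum_add_distrib,
    card_eq_sum_ones]
  refine sum_congr rfl fun x _ => ?_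
  rcases lt_trichotomy (f x) 0 with h | h | h
  · simp [h, h.not_gt, h.ne]
  · simp [h]
  · simp [h, h.not_gt, h.ne']

lemma eq_zero_of_card_filter_pos_eq_card_filter_neg {α : Type*} {S : Finset α} {f : α → ℝ}
    (hcard : #(S.filter (0 < f ·)) = #(S.filter (f · < 0)))
    (hf : (∀ x ∈ S, 0 ≤ f x) ∨ ∀ x ∈ S, f x ≤ 0) :
    ∀ x ∈ S, f x = 0 := by
  have of_nonneg : ∀ g : α → ℝ, #(S.filter (0 < g ·)) = #(S.filter (g · < 0)) →
      (∀ x ∈ S, 0 ≤ g x) → ∀ x ∈ S, g x = 0 := by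
    intro g hcard hg x hx
    have hneg : S.filter (g · < 0) = ∅ := filter_eq_empty_iff.2 fun y hy => (hg y hy).not_gt
    rw [hneg, Finset.card_empty, card_eq_zero, filter_eq_empty_iff] at hcard
    exact le_antisymm (not_lt.1 (hcard hx)) (hg x hx)
  rcases hf with hf | hf
  · exact of_nonneg f hcard hf
  · intro x hx
    have := of_nonneg (-f) (by simpa only [Pi.neg_apply, neg_pos, neg_lt_zero] using hcard.symm)
      (fun y hy => neg_nonneg.2 (hf y hy)) x hx
    rwa [Pi.neg_apply, neg_eq_zero] at this

lemma IsHalvingLine.exists_pair_mem {S : Finset Pt} {L : Set Pt} (hL : IsHalvingLine S L)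
    (hS : Even #S) : ∃ p ∈ S, ∃ q ∈ S, p ≠ q ∧ p ∈ L ∧ q ∈ L := by
  obtain ⟨a, v, -, rfl, ⟨p, hpS, hpL⟩, hcard⟩ := hL
  rw [ncard_sep_coe, ncard_sep_coe] at hcard
  have hsum :=
    card_filter_pos_add_card_filter_neg_add_card_filter_eq_zero S fun x => det2 v (x - a)
  have hpos : 0 < #(S.filter fun x => det2 v (x - a) = 0) :=
    card_pos.2 ⟨p, mem_filter.2 ⟨hpS, hpL⟩⟩
  have htwo : 1 < #(S.filter fun x => det2 v (x - a) = 0) := by obtain ⟨k, hk⟩ := hS; omega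
  obtain ⟨p, hp, q, hq, hpq⟩ := one_lt_card.1 htwo
  rw [mem_filter] at hp hq
  exact ⟨p, hp.1, q, hq.1, hpq, hp.2, hq.2⟩

lemma IsHalvingLine.coe_subset_of_weakly_one_side {S : Finset Pt} {L : Set Pt} {p q : Pt}
    (hL : IsHalvingLine S L) (hp : p ∈ L) (hq : q ∈ L) (hpq : p ≠ q)
    (hside : (∀ x ∈ S, 0 ≤ det2 (q - p) (x - p)) ∨ ∀ x ∈ S, det2 (q - p) (x - p) ≤ 0) :
    (S : Set Pt) ⊆ L := by
  obtain ⟨a, v, hv, rfl, -, hcard⟩ := hL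
  rw [ncard_sep_coe, ncard_sep_coe] at hcard
  obtain ⟨c, hc, hdet⟩ := exists_det2_eq_mul_of_mem_lineThrough hv hp hq hpq
  have hside' : (∀ x ∈ S, 0 ≤ det2 v (x - a)) ∨ ∀ x ∈ S, det2 v (x - a) ≤ 0 := by
    simp only [hdet]
    rcases hc.lt_or_gt with hc | hc <;> rcases hside with h | h <;> [right; left; left; right] <;>
      intro x hx <;> nlinarith [h x hx]
  exact eq_zero_of_card_filter_pos_eq_card_filter_neg hcard hside'

lemma det2_sub_eq_zero_of_collinear {a b c : Pt} (h : Collinear ℝ ({a, b, c} : Set Pt)) :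
    det2 (b - a) (c - a) = 0 := by
  rw [collinear_iff_of_mem (Set.mem_insert a _)] at h
  obtain ⟨v, hv⟩ := h
  obtain ⟨rb, hb⟩ := hv b (by simp)
  obtain ⟨rc, hc⟩ := hv c (by simp)
  rw [hb, hc]
  simp only [vadd_eq_add, add_sub_cancel_right, det2, Prod.smul_fst, Prod.smul_snd, smul_eq_mul]
  ring

def pA : Pt := (0, 0)
def pB : Pt := (1, 0)
def pC : Pt := (0, 1)
def pD : Pt := (1/4, 1/4)

/-- The triangle `pA pB pC` with the interior point `pD`. -/
def S4 : Finset Pt := {pA, pB, pC, pD}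

lemma mem_S4 {x : Pt} : x ∈ S4 ↔ x = pA ∨ x = pB ∨ x = pC ∨ x = pD := by
  simp [S4]

lemma card_S4 : #S4 = 4 := by
  simp [S4, pA, pB, pC, pD, Prod.ext_iff]

lemma genPos_S4 : GenPos S4 := by
  intro a ha b hb c hc hab hac hbc hcol
  have hdet := det2_sub_eq_zero_of_collinear hcol
  rw [mem_S4] at ha hb hc
  rcases ha with rfl | rfl | rfl | rfl <;> rcases hb with rfl | rfl | rfl | rfl <;>
    rcases hc with rfl | rfl | rfl | rfl <;>
    first
      | exact absurd rfl hab
      | exact absurd rfl hac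
      | exact absurd rfl hbc
      | norm_num [det2, pA, pB, pC, pD] at hdet

lemma weakly_one_side_S4 {p q : Pt} (hp : p ∈ S4) (hq : q ∈ S4) (hpD : p ≠ pD) (hqD : q ≠ pD) :
    (∀ x ∈ S4, 0 ≤ det2 (q - p) (x - p)) ∨ ∀ x ∈ S4, det2 (q - p) (x - p) ≤ 0 := by
  rw [mem_S4] at hp hq
  rcases hp with rfl | rfl | rfl | rfl <;> rcases hq with rfl | rfl | rfl | rfl <;>
    first
      | exact absurd rfl hpD
      | exact absurd rfl hqD
      | norm_num [S4, det2, pA, pB, pC, pD]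

lemma pD_mem_of_isHalvingLine {L : Set Pt} (hL : IsHalvingLine S4 L) : pD ∈ L := by
  obtain ⟨p, hp, q, hq, hpq, hpL, hqL⟩ := hL.exists_pair_mem (by rw [card_S4]; decide)
  by_cases hpD : p = pD
  · exact hpD ▸ hpL
  by_cases hqD : q = pD
  · exact hqD ▸ hqL
  exact hL.coe_subset_of_weakly_one_side hpL hqL hpq (weakly_one_side_S4 hp hq hpD hqD)
    (mem_S4.2 (by simp))

/-- There is a set of 4 points in general position with no halving matching. -/
theorem exists_four_points_no_halving_matching :
    ∃ S : Finset Pt, S.card = 4 ∧ GenPos S ∧ ¬ HasHalvingMatching S := by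
  refine ⟨S4, card_S4, genPos_S4, ?_⟩
  rintro ⟨ℓ, hℓ, hinj⟩
  have hD : pD ∈ S4 := mem_S4.2 (by simp)
  obtain ⟨hDhalving, hDonD⟩ := hℓ pD hD
  obtain ⟨X, hX, hXD, hXonD⟩ : ∃ X ∈ S4, X ≠ pD ∧ X ∈ ℓ pD := by
    obtain ⟨p, hp, q, hq, hpq, hpL, hqL⟩ := hDhalving.exists_pair_mem (by rw [card_S4]; decide)
    by_cases hpD : p = pD
    · exact ⟨q, hq, fun h => hpq (hpD.trans h.symm), hqL⟩
    · exact ⟨p, hp, hpD, hpL⟩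
  obtain ⟨hXhalving, hXonX⟩ := hℓ X hX
  refine hinj X hX pD hD hXD ?_
  rw [hXhalving.eq_lineThrough_of_mem hXonX (pD_mem_of_isHalvingLine hXhalving) hXD,
    hDhalving.eq_lineThrough_of_mem hXonD hDonD hXD]
end
end

section
/- The sequence rcr(K_n)/C(n,4) is monotone non-decreasing in n for n ≥ 4. -/
open Filter Set

noncomputable section

/-- Two closed segments cross iff their relative interiors meet. -/
def SegCross (e f : Sym2 Pt) : Prop :=
  ∃ a b c d : Pt, e = s(a, b) ∧ f = s(c, d) ∧
    (openSegment ℝ a b ∩ openSegment ℝ c d).Nonempty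

/-- `e` is an edge of the complete rectilinear drawing on `S`. -/
def IsEdgeOf (S : Finset Pt) (e : Sym2 Pt) : Prop :=
  ∃ a b : Pt, a ∈ S ∧ b ∈ S ∧ a ≠ b ∧ e = s(a, b)

/-- The number of pairs of edges that cross in the rectilinear drawing of the
complete graph with vertex set `S`. -/
def rcrSet (S : Finset Pt) : ℕ :=
  Set.ncard { q : Sym2 (Sym2 Pt) | ∃ e f : Sym2 Pt,
    q = s(e, f) ∧ e ≠ f ∧ IsEdgeOf S e ∧ IsEdgeOf S f ∧ SegCross e f }

/-- The rectilinear crossing number of the complete graph on `n` vertices. -/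
def rcrK (n : ℕ) : ℕ :=
  sInf { m : ℕ | ∃ S : Finset Pt, S.card = n ∧ GenPos S ∧ rcrSet S = m }


/-!
Every crossing of the drawing on a set `S` in general position is determined by the four
endpoints of its two edges, and these are distinct. Deleting a point `x` of `S` therefore keeps
exactly the crossings whose four points avoid `x`, so each crossing survives `|S| - 4` of the
`|S|` deletions and `∑ₓ rcr(S - x) = (|S| - 4) rcr(S)`. For an optimal `S` of size `n + 1`
every summand is at least `rcr(Kₙ)`, whence `(n + 1) rcr(Kₙ) ≤ (n - 3) rcr(Kₙ₊₁)`; the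
binomial identity `(n + 1) C(n, 4) = (n - 3) C(n + 1, 4)` turns this into the claim.
-/

open scoped Finset

open Classical in
theorem sum_ncard_eq_mul_ncard_of_card_filter_eq {ι β : Type*} {s : Finset ι} {P : ι → Set β}
    {Q : Set β} {m : ℕ} (hQ : Q.Finite) (hPQ : ∀ i ∈ s, P i ⊆ Q)
    (hcount : ∀ q ∈ Q, #{i ∈ s | q ∈ P i} = m) :
    ∑ i ∈ s, (P i).ncard = m * Q.ncard := by
  set F := hQ.toFinset
  have hslice : ∀ i ∈ s, (P i).ncard = #(F.bipartiteAbove (fun i q => q ∈ P i) i) := by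
    intro i hi
    rw [← Set.ncard_coe_finset, Finset.bipartiteAbove, Finset.coe_filter]
    congr 1
    ext q
    simpa [F] using fun hq => hPQ i hi hq
  calc ∑ i ∈ s, (P i).ncard
      = ∑ i ∈ s, #(F.bipartiteAbove (fun i q => q ∈ P i) i) := Finset.sum_congr rfl hslice
    _ = ∑ q ∈ F, #(s.bipartiteBelow (fun i q => q ∈ P i) q) :=
      Finset.sum_card_bipartiteAbove_eq_sum_card_bipartiteBelow _
    _ = ∑ q ∈ F, m := Finset.sum_congr rfl fun q hq => hcount q (by simpa [F] using hq)
    _ = m * Q.ncard := by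
      rw [Finset.sum_const, smul_eq_mul, Set.ncard_eq_toFinset_card _ hQ, mul_comm]

theorem collinear_of_openSegment_inter_openSegment {E : Type*} [AddCommGroup E] [Module ℝ E]
    {a b d : E} (h : (openSegment ℝ a b ∩ openSegment ℝ a d).Nonempty) :
    Collinear ℝ ({a, b, d} : Set E) := by
  obtain ⟨x, ⟨u, v, -, hv, huv, rfl⟩, ⟨u', t, -, -, hut, hx⟩⟩ := h
  have hdir : v • (b - a) = t • (d - a) := by
    rw [eq_sub_of_add_eq huv, eq_sub_of_add_eq hut] at hx
    calc v • (b - a) = ((1 - v) • a + v • b) - a := by module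
      _ = ((1 - t) • a + t • d) - a := by rw [hx]
      _ = t • (d - a) := by module
  rw [collinear_iff_of_mem (Set.mem_insert a {b, d})]
  refine ⟨d - a, ?_⟩
  rintro p (rfl | rfl | rfl)
  · exact ⟨0, by simp⟩
  · refine ⟨t / v, ?_⟩
    rw [div_eq_inv_mul, mul_smul, ← hdir, inv_smul_smul₀ hv.ne', vadd_eq_add, sub_add_cancel]
  · exact ⟨1, by simp⟩

theorem not_collinear_parabola {x y z : ℝ} (hxy : x ≠ y) (hxz : x ≠ z) (hyz : y ≠ z) :
    ¬ Collinear ℝ ({(x, x ^ 2), (y, y ^ 2), (z, z ^ 2)} : Set Pt) := by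
  rw [collinear_iff_of_mem (Set.mem_insert _ _)]
  rintro ⟨v, hv⟩
  obtain ⟨r, hr⟩ := hv (y, y ^ 2) (by simp)
  obtain ⟨s, hs⟩ := hv (z, z ^ 2) (by simp)
  simp only [vadd_eq_add, Prod.ext_iff, Prod.fst_add, Prod.snd_add, Prod.smul_fst,
    Prod.smul_snd, smul_eq_mul] at hr hs
  -- the determinant of `(y, y²) - (x, x²)` and `(z, z²) - (x, x²)` is a Vandermonde product
  have hdet : (y - x) * (z - x) * (z - y) = 0 := by
    linear_combination (y - x) * hs.2 + s * v.2 * hr.1 - (y ^ 2 - x ^ 2) * hs.1 - s * v.1 * hr.2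
  rcases mul_eq_zero.mp hdet with h | h
  · rcases mul_eq_zero.mp h with h | h
    · exact hxy (sub_eq_zero.mp h).symm
    · exact hxz (sub_eq_zero.mp h).symm
  · exact hyz (sub_eq_zero.mp h).symm

theorem exists_genPos_card (n : ℕ) : ∃ S : Finset Pt, #S = n ∧ GenPos S := by
  have hinj : Function.Injective fun i : ℕ => ((i : ℝ), (i : ℝ) ^ 2) :=
    fun i j hij => Nat.cast_injective (congrArg Prod.fst hij)
  refine ⟨(Finset.range n).map ⟨_, hinj⟩, by simp, ?_⟩
  simp only [GenPos, Finset.mem_map, Finset.mem_range, Function.Embedding.coeFn_mk]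
  rintro _ ⟨i, -, rfl⟩ _ ⟨j, -, rfl⟩ _ ⟨k, -, rfl⟩ hij hik hjk
  exact not_collinear_parabola (fun h => hij (by rw [h])) (fun h => hik (by rw [h]))
    (fun h => hjk (by rw [h]))

theorem GenPos.mono {S T : Finset Pt} (hST : T ⊆ S) (hS : GenPos S) : GenPos T :=
  fun a ha b hb c hc => hS a (hST ha) b (hST hb) c (hST hc)

theorem isEdgeOf_mk_iff {S : Finset Pt} {a b : Pt} :
    IsEdgeOf S s(a, b) ↔ a ∈ S ∧ b ∈ S ∧ a ≠ b := by
  constructor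
  · rintro ⟨a', b', ha', hb', hab', he⟩
    rcases Sym2.eq_iff.mp he with ⟨rfl, rfl⟩ | ⟨rfl, rfl⟩
    · exact ⟨ha', hb', hab'⟩
    · exact ⟨hb', ha', hab'.symm⟩
  · rintro ⟨ha, hb, hab⟩
    exact ⟨a, b, ha, hb, hab, rfl⟩

theorem openSegment_eq_of_mk_eq {E : Type*} [AddCommGroup E] [Module ℝ E] {a b c d : E}
    (h : s(a, b) = s(c, d)) :
    openSegment ℝ a b = openSegment ℝ c d := by
  rcases Sym2.eq_iff.mp h with ⟨rfl, rfl⟩ | ⟨rfl, rfl⟩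
  · rfl
  · exact openSegment_symm ℝ a b

theorem segCross_mk_iff {a b c d : Pt} :
    SegCross s(a, b) s(c, d) ↔ (openSegment ℝ a b ∩ openSegment ℝ c d).Nonempty := by
  constructor
  · rintro ⟨a', b', c', d', he, hf, hx⟩
    rwa [openSegment_eq_of_mk_eq he, openSegment_eq_of_mk_eq hf]
  · exact fun hx => ⟨a, b, c, d, rfl, rfl, hx⟩

theorem SegCross.symm {e f : Sym2 Pt} : SegCross e f → SegCross f e :=
  fun ⟨a, b, c, d, he, hf, hx⟩ => ⟨c, d, a, b, hf, he, Set.inter_comm _ _ ▸ hx⟩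

def crossingPairs (S : Finset Pt) : Set (Sym2 (Sym2 Pt)) :=
  {q | ∃ e f : Sym2 Pt,
    q = s(e, f) ∧ e ≠ f ∧ IsEdgeOf S e ∧ IsEdgeOf S f ∧ SegCross e f}

theorem rcrSet_eq_ncard_crossingPairs (S : Finset Pt) :
    rcrSet S = (crossingPairs S).ncard := rfl

theorem mk_mem_crossingPairs_iff {S : Finset Pt} {e f : Sym2 Pt} :
    s(e, f) ∈ crossingPairs S ↔ e ≠ f ∧ IsEdgeOf S e ∧ IsEdgeOf S f ∧ SegCross e f := by
  constructor
  · rintro ⟨e', f', hq, hne, he, hf, hx⟩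
    rcases Sym2.eq_iff.mp hq with ⟨rfl, rfl⟩ | ⟨rfl, rfl⟩
    · exact ⟨hne, he, hf, hx⟩
    · exact ⟨hne.symm, hf, he, hx.symm⟩
  · exact fun h => ⟨e, f, rfl, h⟩

theorem crossingPairs_subset_sym2_sym2 (S : Finset Pt) :
    crossingPairs S ⊆ (S.sym2.sym2 : Set (Sym2 (Sym2 Pt))) := by
  rintro _ ⟨e, f, rfl, -, ⟨a, b, ha, hb, -, rfl⟩, ⟨c, d, hc, hd, -, rfl⟩, -⟩
  simp [ha, hb, hc, hd]

theorem crossingPairs_mono {S T : Finset Pt} (hST : T ⊆ S) :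
    crossingPairs T ⊆ crossingPairs S := by
  rintro _ ⟨e, f, rfl, hne, ⟨a, b, ha, hb, hab, rfl⟩, ⟨c, d, hc, hd, hcd, rfl⟩, hx⟩
  exact ⟨_, _, rfl, hne, ⟨a, b, hST ha, hST hb, hab, rfl⟩,
    ⟨c, d, hST hc, hST hd, hcd, rfl⟩, hx⟩

theorem mk_mem_crossingPairs_iff_subset {S T : Finset Pt} {a b c d : Pt}
    (h : s(s(a, b), s(c, d)) ∈ crossingPairs S) :
    s(s(a, b), s(c, d)) ∈ crossingPairs T ↔ {a, b, c, d} ⊆ T := by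
  simp only [mk_mem_crossingPairs_iff, isEdgeOf_mk_iff, Finset.insert_subset_iff,
    Finset.singleton_subset_iff] at h ⊢
  tauto

theorem GenPos.left_ne_left_of_mk_mem_crossingPairs {S : Finset Pt} (hS : GenPos S)
    {a b c d : Pt} (h : s(s(a, b), s(c, d)) ∈ crossingPairs S) : a ≠ c := by
  rintro rfl
  rw [mk_mem_crossingPairs_iff, isEdgeOf_mk_iff, isEdgeOf_mk_iff, segCross_mk_iff] at h
  obtain ⟨hne, ⟨ha, hb, hab⟩, ⟨-, hd, had⟩, hx⟩ := h
  have hbd : b ≠ d := by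
    rintro rfl
    exact hne rfl
  exact hS a ha b hb d hd hab had hbd (collinear_of_openSegment_inter_openSegment hx)

theorem GenPos.card_eq_four_of_mk_mem_crossingPairs {S : Finset Pt} (hS : GenPos S)
    {a b c d : Pt} (h : s(s(a, b), s(c, d)) ∈ crossingPairs S) : #{a, b, c, d} = 4 := by
  have hab : a ≠ b := (isEdgeOf_mk_iff.mp (mk_mem_crossingPairs_iff.mp h).2.1).2.2
  have hcd : c ≠ d := (isEdgeOf_mk_iff.mp (mk_mem_crossingPairs_iff.mp h).2.2.1).2.2
  have hdc : s(s(a, b), s(d, c)) ∈ crossingPairs S := Sym2.eq_swap (a := c) ▸ h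
  have hba : s(s(b, a), s(c, d)) ∈ crossingPairs S := Sym2.eq_swap (a := a) ▸ h
  have hbadc : s(s(b, a), s(d, c)) ∈ crossingPairs S := Sym2.eq_swap (a := c) ▸ hba
  exact Finset.card_eq_four.mpr ⟨a, b, c, d, hab, hS.left_ne_left_of_mk_mem_crossingPairs h,
    hS.left_ne_left_of_mk_mem_crossingPairs hdc, hS.left_ne_left_of_mk_mem_crossingPairs hba,
    hS.left_ne_left_of_mk_mem_crossingPairs hbadc, hcd, rfl⟩

theorem GenPos.sum_rcrSet_erase {S : Finset Pt} (hS : GenPos S) :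
    ∑ x ∈ S, rcrSet (S.erase x) = (#S - 4) * rcrSet S := by
  classical
  simp only [rcrSet_eq_ncard_crossingPairs]
  refine sum_ncard_eq_mul_ncard_of_card_filter_eq ((S.sym2.sym2.finite_toSet).subset
    (crossingPairs_subset_sym2_sym2 S)) (fun x _ => crossingPairs_mono (S.erase_subset x)) ?_
  rintro q hq
  obtain ⟨e, f, rfl, -, -, -, a, b, c, d, rfl, rfl, -⟩ := id hq
  have hsub : {a, b, c, d} ⊆ S := (mk_mem_crossingPairs_iff_subset hq).mp hq
  have hsurvive :
      {x ∈ S | s(s(a, b), s(c, d)) ∈ crossingPairs (S.erase x)} = S \ {a, b, c, d} := by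
    ext x
    simp [mk_mem_crossingPairs_iff_subset hq, Finset.subset_erase, hsub]
  rw [hsurvive, Finset.card_sdiff_of_subset hsub, hS.card_eq_four_of_mk_mem_crossingPairs hq]

theorem rcrK_card_le_rcrSet {S : Finset Pt} (hS : GenPos S) : rcrK #S ≤ rcrSet S :=
  Nat.sInf_le ⟨S, rfl, hS, rfl⟩

theorem exists_rcrSet_eq_rcrK (n : ℕ) :
    ∃ S : Finset Pt, #S = n ∧ GenPos S ∧ rcrSet S = rcrK n := by
  obtain ⟨S, hn, hS⟩ := exists_genPos_card n
  exact Nat.sInf_mem (s := {m | ∃ S : Finset Pt, #S = n ∧ GenPos S ∧ rcrSet S = m})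
    ⟨_, S, hn, hS, rfl⟩

theorem succ_mul_rcrK_le (n : ℕ) : (n + 1) * rcrK n ≤ (n - 3) * rcrK (n + 1) := by
  obtain ⟨S, hcard, hS, hopt⟩ := exists_rcrSet_eq_rcrK (n + 1)
  calc (n + 1) * rcrK n
      = ∑ x ∈ S, rcrK n := by rw [Finset.sum_const, hcard, smul_eq_mul]
    _ ≤ ∑ x ∈ S, rcrSet (S.erase x) := Finset.sum_le_sum fun x hx => by
      simpa [Finset.card_erase_of_mem hx, hcard] using
        rcrK_card_le_rcrSet (hS.mono (S.erase_subset x))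
    _ = (n - 3) * rcrK (n + 1) := by rw [hS.sum_rcrSet_erase, hcard, hopt]; rfl

/-- The sequence `rcr(K_n)/C(n,4)` is monotone non-decreasing for `n ≥ 4`. -/
theorem rcrK_ratio_monotone (n : ℕ) (hn : 4 ≤ n) :
    (rcrK n : ℝ) / (n.choose 4 : ℝ) ≤ (rcrK (n + 1) : ℝ) / ((n + 1).choose 4 : ℝ) := by
  have hchoose : n.choose 4 * (n + 1) = (n + 1).choose 4 * (n - 3) := Nat.choose_mul_succ_eq n 4
  have hcross : rcrK n * (n + 1).choose 4 ≤ rcrK (n + 1) * n.choose 4 := by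
    refine Nat.le_of_mul_le_mul_right ?_ (show 0 < n - 3 by omega)
    calc rcrK n * (n + 1).choose 4 * (n - 3)
        = (n + 1) * rcrK n * n.choose 4 := by rw [mul_assoc, ← hchoose]; ring
      _ ≤ (n - 3) * rcrK (n + 1) * n.choose 4 := Nat.mul_le_mul_right _ (succ_mul_rcrK_le n)
      _ = rcrK (n + 1) * n.choose 4 * (n - 3) := by ring
  rw [div_le_div_iff₀ (by exact_mod_cast Nat.choose_pos hn)
    (by exact_mod_cast Nat.choose_pos (by omega : 4 ≤ n + 1))]
  exact_mod_cast hcross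
end
end

section
/- Define f(n) = 16·f(n/2) + (n/4)(2(n/2)² − 7(n/2) + 5) with f(n₀) = c for a fixed even n₀ and c ≥ 0, on the sequence n = 2^k n₀. Then lim_{k→∞} f(2^k n₀)/C(2^k n₀, 4) = (24c + 3n₀³ − 7n₀² + (30/7)n₀)/n₀⁴. -/
open Filter Topology

/-!
Subtracting the particular solution `p(m) = -m³/8 + 7m²/24 - 5m/28` of the inhomogeneous
recurrence leaves a solution of `g(2m) = 16 g(m)`, i.e. `f = α m⁴ + p(m)` along `m = 2^k n₀`
with `α = (c - p(n₀))/n₀⁴`. Since `C(m, 4) ~ m⁴/24`, the ratio tends to `24 α`.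
-/

theorem cast_choose_four {K : Type*} [Field K] [CharZero K] (n : ℕ) :
    (n.choose 4 : K) = n * (n - 1) * (n - 2) * (n - 3) / 24 := by
  rw [Nat.cast_choose_eq_descPochhammer_div]
  simp only [descPochhammer_succ_eval, descPochhammer_zero, Polynomial.eval_one]
  norm_num [Nat.factorial]

noncomputable def doublingParticular (m : ℝ) : ℝ := -m ^ 3 / 8 + 7 * m ^ 2 / 24 - 5 * m / 28

theorem doublingParticular_two_mul (m : ℝ) :
    doublingParticular (2 * m) = 16 * doublingParticular m + m / 2 * (2 * m ^ 2 - 7 * m + 5) := by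
  unfold doublingParticular
  ring

theorem sub_doublingParticular_eq {f m : ℕ → ℝ} (hm : ∀ k, m (k + 1) = 2 * m k)
    (hrec : ∀ k, f (k + 1) = 16 * f k + m k / 2 * (2 * m k ^ 2 - 7 * m k + 5)) (k : ℕ) :
    f k - doublingParticular (m k) = 16 ^ k * (f 0 - doublingParticular (m 0)) := by
  induction k with
  | zero => simp
  | succ k ih =>
    rw [hrec, hm, doublingParticular_two_mul, pow_succ]
    linear_combination 16 * ih

theorem tendsto_quartic_div_choose_four (a b c d : ℝ) :
    Tendsto (fun x : ℝ => (a * x ^ 4 + b * x ^ 3 + c * x ^ 2 + d * x) /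
      (x * (x - 1) * (x - 2) * (x - 3) / 24)) atTop (𝓝 (24 * a)) := by
  let g : ℝ → ℝ := fun y => (a + b * y + c * y ^ 2 + d * y ^ 3) /
    ((1 - y) * (1 - 2 * y) * (1 - 3 * y) / 24)
  have hg : Tendsto g (𝓝 0) (𝓝 (24 * a)) := by
    have : ContinuousAt g 0 := by
      apply ContinuousAt.div (by fun_prop) (by fun_prop)
      norm_num
    simpa [g, div_div_eq_mul_div, mul_comm] using this.tendsto
  refine (hg.comp tendsto_inv_atTop_zero).congr' ?_
  filter_upwards [eventually_gt_atTop 0] with x hx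
  have hx4 : x ^ 4 ≠ 0 := by positivity
  simp only [Function.comp_apply, g]
  rw [← mul_div_mul_right _ _ hx4]
  congr 1 <;> field_simp

theorem doubling_recurrence_limit_general (n₀ : ℕ) (hn₀ : 0 < n₀)
    (c : ℝ) (f : ℕ → ℝ) (hf0 : f 0 = c)
    (hrec : ∀ k : ℕ, f (k + 1) =
      16 * f k + ((2 ^ k * n₀ : ℕ) : ℝ) / 2 *
        (2 * ((2 ^ k * n₀ : ℕ) : ℝ) ^ 2 - 7 * ((2 ^ k * n₀ : ℕ) : ℝ) + 5)) :
    Tendsto (fun k : ℕ => f k / (((2 ^ k * n₀).choose 4 : ℕ) : ℝ)) atTop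
      (nhds ((24 * c + 3 * (n₀ : ℝ) ^ 3 - 7 * (n₀ : ℝ) ^ 2 + (30 / 7) * (n₀ : ℝ)) /
        (n₀ : ℝ) ^ 4)) := by
  set m : ℕ → ℝ := fun k => ((2 ^ k * n₀ : ℕ) : ℝ)
  have hm_eq : ∀ k, m k = 2 ^ k * n₀ := fun k => by simp [m]
  have hm : ∀ k, m (k + 1) = 2 * m k := fun k => by rw [hm_eq, hm_eq]; ring
  have hm_top : Tendsto m atTop atTop := by
    rw [funext hm_eq]
    exact (tendsto_pow_atTop_atTop_of_one_lt one_lt_two).atTop_mul_const (by positivity)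
  obtain ⟨α, hα⟩ : ∃ α : ℝ, α * n₀ ^ 4 = c - doublingParticular n₀ :=
    ⟨_, div_mul_cancel₀ _ (by positivity)⟩
  have hclosed : ∀ k, f k = α * m k ^ 4 + doublingParticular (m k) := fun k => by
    have key := sub_doublingParticular_eq hm hrec k
    rw [hf0, hm_eq 0, pow_zero, one_mul, show (16 : ℝ) ^ k = (2 ^ k) ^ 4 by
      rw [← pow_mul, mul_comm, pow_mul]; norm_num] at key
    rw [hm_eq] at key ⊢
    linear_combination key - (2 ^ k) ^ 4 * hα
  have hlim := (tendsto_quartic_div_choose_four α (-1 / 8) (7 / 24) (-5 / 28)).comp hm_top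
  convert hlim using 2 with k
  · rw [Function.comp_apply, hclosed, cast_choose_four, doublingParticular]
    ring
  · rw [div_eq_iff (by positivity)]
    unfold doublingParticular at hα
    linear_combination -24 * hα

/-- Iterating the doubling recurrence
`f(2m) = 16·f(m) + (m/2)(2m² − 7m + 5)` starting from an even `n₀` with value
`c ≥ 0`, the normalized sequence `f(2^k n₀)/C(2^k n₀, 4)` converges to
`(24c + 3n₀³ − 7n₀² + (30/7)n₀)/n₀⁴`. -/
theorem doubling_recurrence_limit (n₀ : ℕ) (hn₀ : 0 < n₀) (hE : Even n₀)
    (c : ℝ) (hc : 0 ≤ c) (f : ℕ → ℝ) (hf0 : f 0 = c)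
    (hrec : ∀ k : ℕ, f (k + 1) =
      16 * f k + ((2 ^ k * n₀ : ℕ) : ℝ) / 2 *
        (2 * ((2 ^ k * n₀ : ℕ) : ℝ) ^ 2 - 7 * ((2 ^ k * n₀ : ℕ) : ℝ) + 5)) :
    Tendsto (fun k : ℕ => f k / (((2 ^ k * n₀).choose 4 : ℕ) : ℝ)) atTop
      (nhds ((24 * c + 3 * (n₀ : ℝ) ^ 3 - 7 * (n₀ : ℝ) ^ 2 + (30 / 7) * (n₀ : ℝ)) /
        (n₀ : ℝ) ^ 4)) :=
  doubling_recurrence_limit_general n₀ hn₀ c f hf0 hrec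
end
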